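/- Let s be a natural number and let C be a finite set of cells of the integer grid having maximum cardinality among all finite sets of cells whose span is at most s. Then every cell of C that is adjacent to at least one cell not in C has at most 2 of its 4 adjacent cells in C. -/

import Mathlib

/-!
Suppose a cell `c` of `C` has a neighbour `d ∉ C` but at least three neighbours in `C`; then all
neighbours of `c` other than `d` lie in `C`. For any cell `e`, the distance from `d` to `e` is at
most the distance from `c` or from one of the two neighbours of `c` perpendicular to `d`: if `d` is
not closer to `e` than `c` is, then stepping from `c` sideways, away from `e`, also increases the
distance by one. Hence `C ∪ {d}` still has span at most `s`, contradicting maximality.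
-/

/-- Manhattan distance between two cells of the integer grid. -/
def mdist (p q : ℤ × ℤ) : ℕ := (p.1 - q.1).natAbs + (p.2 - q.2).natAbs

/-- The disc of radius `r` centered at `c`: all cells at Manhattan distance at most `r`. -/
noncomputable def disc (r : ℕ) (c : ℤ × ℤ) : Finset (ℤ × ℤ) :=
  (Finset.Icc (c.1 - r, c.2 - r) (c.1 + r, c.2 + r)).filter (fun p => mdist p c ≤ r)

/-- The span of a finite set of cells: the maximum Manhattan distance between two of
its cells (`0` if the set has at most one cell). -/
def span (S : Finset (ℤ × ℤ)) : ℕ := (S ×ˢ S).sup fun pq => mdist pq.1 pq.2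

lemma mdist_comm (p q : ℤ × ℤ) : mdist p q = mdist q p := by
  simp only [mdist]; omega

lemma span_le_iff {S : Finset (ℤ × ℤ)} {s : ℕ} :
    span S ≤ s ↔ ∀ p ∈ S, ∀ q ∈ S, mdist p q ≤ s :=
  Finset.sup_le_iff.trans ⟨fun h p hp q hq => h (p, q) (Finset.mem_product.mpr ⟨hp, hq⟩),
    fun h _ hpq => h _ (Finset.mem_product.mp hpq).1 _ (Finset.mem_product.mp hpq).2⟩

lemma mdist_le_span {S : Finset (ℤ × ℤ)} {p q : ℤ × ℤ} (hp : p ∈ S) (hq : q ∈ S) :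
    mdist p q ≤ span S :=
  span_le_iff.mp le_rfl p hp q hq

lemma span_insert_le {S : Finset (ℤ × ℤ)} {d : ℤ × ℤ} {s : ℕ} (hS : span S ≤ s)
    (hd : ∀ e ∈ S, mdist d e ≤ s) : span (insert d S) ≤ s := by
  rw [span_le_iff] at hS ⊢
  simp only [Finset.mem_insert, forall_eq_or_imp]
  refine ⟨⟨by simp [mdist], hd⟩, fun p hp => ⟨mdist_comm p d ▸ hd p hp, hS p hp⟩⟩

def neighbors (c : ℤ × ℤ) : Finset (ℤ × ℤ) :=
  {(c.1 + 1, c.2), (c.1 - 1, c.2), (c.1, c.2 + 1), (c.1, c.2 - 1)}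

lemma mem_neighbors {c p : ℤ × ℤ} : p ∈ neighbors c ↔ mdist c p = 1 := by
  obtain ⟨x, y⟩ := c
  obtain ⟨a, b⟩ := p
  simp only [neighbors, mdist, Finset.mem_insert, Finset.mem_singleton, Prod.mk.injEq]
  omega

lemma card_filter_adjacent_le_two {S : Finset (ℤ × ℤ)} {c d p : ℤ × ℤ}
    (hcd : mdist c d = 1) (hcp : mdist c p = 1) (hpd : p ≠ d) (hd : d ∉ S) (hp : p ∉ S) :
    (S.filter (fun q => mdist c q = 1)).card ≤ 2 := by
  have hsub : S.filter (fun q => mdist c q = 1) ⊆ ((neighbors c).erase d).erase p := by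
    intro q hq
    rw [Finset.mem_filter] at hq
    simp only [Finset.mem_erase, mem_neighbors]
    exact ⟨fun h => hp (h ▸ hq.1), fun h => hd (h ▸ hq.1), hq.2⟩
  have hd' : d ∈ neighbors c := mem_neighbors.mpr hcd
  have hp' : p ∈ (neighbors c).erase d := Finset.mem_erase.mpr ⟨hpd, mem_neighbors.mpr hcp⟩
  have hcard := Finset.card_le_card hsub
  rw [Finset.card_erase_of_mem hp', Finset.card_erase_of_mem hd'] at hcard
  have hfour : (neighbors c).card ≤ 4 := Finset.card_le_four
  omega

lemma mdist_le_of_adjacent (c d e : ℤ × ℤ) (hcd : mdist c d = 1) :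
    ∃ p, (p = c ∨ mdist c p = 1 ∧ p ≠ d) ∧ mdist d e ≤ mdist p e := by
  by_cases hde : mdist d e ≤ mdist c e
  · exact ⟨c, Or.inl rfl, hde⟩
  obtain ⟨x, y⟩ := c
  obtain ⟨x', y'⟩ := d
  obtain ⟨a, b⟩ := e
  simp only [mdist] at hcd hde
  rcases eq_or_ne x x' with hx | hx <;> rcases le_total y b with hb | hb <;>
    rcases le_total x a with ha | ha
  all_goals first
    | refine ⟨(x, y - 1), Or.inr ⟨?_, ?_⟩, ?_⟩ <;> simp only [mdist, ne_eq, Prod.ext_iff] <;> omega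
    | refine ⟨(x, y + 1), Or.inr ⟨?_, ?_⟩, ?_⟩ <;> simp only [mdist, ne_eq, Prod.ext_iff] <;> omega
    | refine ⟨(x - 1, y), Or.inr ⟨?_, ?_⟩, ?_⟩ <;> simp only [mdist, ne_eq, Prod.ext_iff] <;> omega
    | refine ⟨(x + 1, y), Or.inr ⟨?_, ?_⟩, ?_⟩ <;> simp only [mdist, ne_eq, Prod.ext_iff] <;> omega

lemma span_insert_le_of_forall_adjacent_mem {S : Finset (ℤ × ℤ)} {c d : ℤ × ℤ} (hc : c ∈ S)
    (hcd : mdist c d = 1) (hS : ∀ p, mdist c p = 1 → p ≠ d → p ∈ S) :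
    span (insert d S) ≤ span S := by
  refine span_insert_le le_rfl fun e he => ?_
  obtain ⟨p, hp, hde⟩ := mdist_le_of_adjacent c d e hcd
  have hpS : p ∈ S := by
    rcases hp with rfl | ⟨hcp, hpd⟩
    exacts [hc, hS p hcp hpd]
  exact hde.trans (mdist_le_span hpS he)

/-- In a maximum-cardinality finite set of cells of span at most `s`, every cell that is
adjacent to some cell outside the set has at most `2` of its `4` adjacent cells in the
set. -/
theorem max_card_border_cell (s : ℕ) (C : Finset (ℤ × ℤ))
    (hC : span C ≤ s)
    (hmax : ∀ S : Finset (ℤ × ℤ), span S ≤ s → S.card ≤ C.card) :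
    ∀ c ∈ C, (∃ d : ℤ × ℤ, mdist c d = 1 ∧ d ∉ C) →
      (C.filter (fun d => mdist c d = 1)).card ≤ 2 := by
  rintro c hc ⟨d, hcd, hdC⟩
  by_contra! hcard
  have hnbr : ∀ p, mdist c p = 1 → p ≠ d → p ∈ C := fun p hcp hpd => by
    by_contra hpC
    exact hcard.not_ge (card_filter_adjacent_le_two hcd hcp hpd hdC hpC)
  have hle := hmax (insert d C) ((span_insert_le_of_forall_adjacent_mem hc hcd hnbr).trans hC)
  rw [Finset.card_insert_of_notMem hdC] at hle
  omega
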